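/- arXiv:2503.18205 — 5 statements merged into one kernel-verified Lean document; each statement's English description precedes it below -/
import Mathlib

section
/- Let A be a commutative ring of characteristic zero, t ∈ A an element such that A is t-adically complete, and ∂ : A → A a derivation with ∂(t) a unit. Then the composition Ker(∂) → A → A/tA is an isomorphism of rings. -/
/-!
We may assume `D t = 1`, dividing `D` by the unit `D t`.

Injectivity: an element of `Ker D ∩ tA` is `t c` with `c + t D c = 0`. Applying `Dᵏ` gives
`(k + 1) Dᵏ c = -t Dᵏ⁺¹ c`; dividing by `k + 1` (possible over `ℚ`) shows by induction on `n`
that `tⁿ` divides every `Dᵏ c`, so `c = 0` by separatedness.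

Surjectivity: the Taylor series `∑ₙ (-t)ⁿ/n! Dⁿ a` converges `t`-adically and is `≡ a mod t`.
Applying `D` to its partial sums telescopes to `(-t)ᴺ/N! Dᴺ⁺¹ a`, so the limit lies in `Ker D`.
-/

open Finset

section AdicSpanSingleton

variable {A : Type*} [CommRing A] (t : A)

theorem smodEq_span_singleton_pow_iff {n : ℕ} {x y : A} :
    x ≡ y [SMOD (Ideal.span {t} ^ n • ⊤ : Submodule A A)] ↔ t ^ n ∣ x - y := by
  rw [SModEq.sub_mem, smul_eq_mul, Ideal.mul_top, Ideal.span_singleton_pow,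
    Ideal.mem_span_singleton]

variable {t}

theorem eq_zero_of_forall_pow_dvd [IsHausdorff (Ideal.span {t}) A] {x : A}
    (h : ∀ n, t ^ n ∣ x) : x = 0 :=
  IsHausdorff.haus ‹_› x fun n => (smodEq_span_singleton_pow_iff t).2 (by simpa using h n)

theorem exists_forall_pow_dvd_sub_sum [IsPrecomplete (Ideal.span {t}) A] {f : ℕ → A}
    (hf : ∀ n, t ^ n ∣ f n) : ∃ L : A, ∀ n, t ^ n ∣ L - ∑ i ∈ range n, f i := by
  have hcauchy {m n : ℕ} (hmn : m ≤ n) : ∑ i ∈ range m, f i ≡ ∑ i ∈ range n, f i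
      [SMOD (Ideal.span {t} ^ m • ⊤ : Submodule A A)] := by
    rw [smodEq_span_singleton_pow_iff, ← sum_range_add_sum_Ico _ hmn, sub_add_cancel_left,
      dvd_neg]
    exact dvd_sum fun i hi => (pow_dvd_pow t (mem_Ico.1 hi).1).trans (hf i)
  obtain ⟨L, hL⟩ := IsPrecomplete.prec ‹_› hcauchy
  exact ⟨L, fun n => (smodEq_span_singleton_pow_iff t).1 (hL n).symm⟩

end AdicSpanSingleton

theorem pow_dvd_of_nsmul_succ_add_mul_eq_zero {A : Type*} [CommRing A] [Algebra ℚ A] {t : A}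
    {y : ℕ → A} (h : ∀ k, (k + 1) • y k + t * y (k + 1) = 0) (n k : ℕ) : t ^ n ∣ y k := by
  induction n generalizing k with
  | zero => simp
  | succ n ih =>
    have hk : y k = t * (((k + 1 : ℕ) : ℚ)⁻¹ • -y (k + 1)) := by
      rw [mul_smul_comm, mul_neg, neg_eq_of_add_eq_zero_left (h k), ← Nat.cast_smul_eq_nsmul ℚ,
        smul_smul, inv_mul_cancel₀ (by positivity), one_smul]
    rw [hk, pow_succ', Algebra.smul_def]
    exact mul_dvd_mul_left t (dvd_mul_of_dvd_right (ih (k + 1)).neg_right _)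

namespace Derivation

variable {R A : Type*} [CommSemiring R] [CommRing A] [Algebra R A] (δ : Derivation R A A)

theorem pow_dvd_apply_of_pow_succ_dvd {t x : A} {n : ℕ} (h : t ^ (n + 1) ∣ x) : t ^ n ∣ δ x := by
  obtain ⟨c, rfl⟩ := h
  exact ⟨t * δ c + (n + 1) * c * δ t, by
    simp only [leibniz, leibniz_pow, add_tsub_cancel_right, smul_eq_mul, nsmul_eq_mul]; push_cast; ring⟩

variable {δ} {t : A}

theorem iterate_succ_apply_mul (ht : δ t = 1) (x : A) (n : ℕ) :
    δ^[n + 1] (t * x) = t * δ^[n + 1] x + (n + 1) • δ^[n] x := by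
  induction n with
  | zero => simp [leibniz, ht]
  | succ n ih =>
    rw [Function.iterate_succ_apply', ih, map_add, leibniz, ht, map_nsmul]
    simp only [Function.iterate_succ_apply', smul_eq_mul, nsmul_eq_mul, mul_one]
    push_cast
    ring

variable [Algebra ℚ A]

theorem eq_zero_of_apply_mul_eq_zero [IsHausdorff (Ideal.span {t}) A]
    (ht : δ t = 1) {c : A} (hc : δ (t * c) = 0) : c = 0 := by
  have hrec (k : ℕ) : (k + 1) • δ^[k] c + t * δ^[k + 1] c = 0 := by
    rw [add_comm, ← iterate_succ_apply_mul ht, Function.iterate_succ_apply, hc,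
      Function.iterate_fixed (map_zero δ)]
  exact eq_zero_of_forall_pow_dvd fun n => pow_dvd_of_nsmul_succ_add_mul_eq_zero hrec n 0

theorem eq_of_apply_eq_zero_of_dvd_sub [IsHausdorff (Ideal.span {t}) A]
    (ht : δ t = 1) {a b : A} (ha : δ a = 0) (hb : δ b = 0) (hab : t ∣ a - b) : a = b := by
  obtain ⟨c, hc⟩ := hab
  have hc0 : c = 0 := eq_zero_of_apply_mul_eq_zero ht (by rw [← hc, map_sub, ha, hb, sub_zero])
  rwa [hc0, mul_zero, sub_eq_zero] at hc

variable (δ t) in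
noncomputable def taylorPartialSum (a : A) (N : ℕ) : A :=
  ∑ n ∈ range N, ((-1) ^ n / n.factorial : ℚ) • (t ^ n * δ^[n] a)

theorem apply_taylorPartialSum_succ (ht : δ t = 1) (a : A) (N : ℕ) :
    δ (taylorPartialSum δ t a (N + 1)) = ((-1) ^ N / N.factorial : ℚ) • (t ^ N * δ^[N + 1] a) := by
  induction N with
  | zero => simp [taylorPartialSum]
  | succ N ih =>
    rw [taylorPartialSum] at ih ⊢
    have hcoef : algebraMap ℚ A ((-1) ^ (N + 1) / (N + 1).factorial) * ((N + 1 : ℕ) : A) =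
        -algebraMap ℚ A ((-1) ^ N / N.factorial) := by
      rw [← _root_.map_natCast (algebraMap ℚ A), ← map_mul, ← map_neg]
      congr 1
      field_simp
      push_cast [Nat.factorial_succ, pow_succ]
      ring
    rw [sum_range_succ, map_add, ih, map_rat_smul, leibniz, leibniz_pow, ht,
      ← Function.iterate_succ_apply' δ (N + 1)]
    simp only [smul_eq_mul, nsmul_eq_mul, add_tsub_cancel_right, mul_one, Nat.succ_eq_add_one]
    simp only [Algebra.smul_def]
    linear_combination (t ^ N * δ^[N + 1] a) * hcoef

theorem exists_apply_eq_zero_dvd_sub [IsAdicComplete (Ideal.span {t}) A]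
    (ht : δ t = 1) (a : A) : ∃ L : A, δ L = 0 ∧ t ∣ L - a := by
  have hterm (n : ℕ) (x : A) : t ^ n ∣ ((-1) ^ n / n.factorial : ℚ) • (t ^ n * x) := by
    rw [← mul_smul_comm]
    exact dvd_mul_right _ _
  obtain ⟨L, hL⟩ : ∃ L : A, ∀ n, t ^ n ∣ L - taylorPartialSum δ t a n :=
    exists_forall_pow_dvd_sub_sum fun n => hterm n (δ^[n] a)
  refine ⟨L, eq_zero_of_forall_pow_dvd (t := t) fun n => ?_, by simpa [taylorPartialSum] using hL 1⟩
  have hδL : δ L = δ (L - taylorPartialSum δ t a (n + 1)) +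
      ((-1) ^ n / n.factorial : ℚ) • (t ^ n * δ^[n + 1] a) := by
    rw [← apply_taylorPartialSum_succ ht, ← map_add, sub_add_cancel]
  rw [hδL]
  exact dvd_add (pow_dvd_apply_of_pow_succ_dvd δ (hL (n + 1))) (hterm n _)

end Derivation

/-- Splitting lemma: for a `t`-adically complete ring `A` of characteristic zero and a
derivation `D` with `D t` a unit, the composition `Ker D → A → A/tA` is a ring isomorphism
(formalized as bijectivity of the induced map, which is a restriction of a ring homomorphism). -/
theorem statement0 {A : Type*} [CommRing A] [Algebra ℚ A] (t : A)
    (hcomplete : IsAdicComplete (Ideal.span {t}) A)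
    (D : A → A)
    (hadd : ∀ a b : A, D (a + b) = D a + D b)
    (hleibniz : ∀ a b : A, D (a * b) = a * D b + b * D a)
    (hunit : IsUnit (D t)) :
    Function.Bijective
      (fun x : {a : A // D a = 0} => Ideal.Quotient.mk (Ideal.span {t}) x.1) := by
  obtain ⟨u, hu⟩ := hunit
  let δ : Derivation ℤ A A :=
    (↑u⁻¹ : A) • Derivation.mk' (AddMonoidHom.mk' D hadd).toIntLinearMap hleibniz
  have hδ (a : A) : δ a = 0 ↔ D a = 0 := u⁻¹.mul_right_eq_zero
  have hδt : δ t = 1 := by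
    show (↑u⁻¹ : A) * D t = 1
    rw [← hu, Units.inv_mul]
  constructor
  · rintro ⟨a, ha⟩ ⟨b, hb⟩ hab
    refine Subtype.ext (δ.eq_of_apply_eq_zero_of_dvd_sub hδt ((hδ a).2 ha) ((hδ b).2 hb) ?_)
    exact Ideal.mem_span_singleton.1 (Ideal.Quotient.eq.1 hab)
  · intro q
    obtain ⟨a, rfl⟩ := Ideal.Quotient.mk_surjective q
    obtain ⟨L, hL, hLa⟩ := δ.exists_apply_eq_zero_dvd_sub hδt a
    exact ⟨⟨L, (hδ L).1 hL⟩, Ideal.Quotient.eq.2 (Ideal.mem_span_singleton.2 hLa)⟩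
end

section
/- Let A be a commutative ring of characteristic zero, t ∈ A such that A is t-adically complete, and ∂ : A → A a derivation with ∂(t) = 1. If b = Σ_{i≥0} b_i t^i with all b_i ∈ Ker(∂) and ∂(b) = 0, then b = b_0, i.e. the natural map from the power series construction Ker(∂)⟦t⟧ → A is injective on elements mapping into Ker(∂). -/
/-!
Subtracting `b₀` leaves `x = b - b₀ ∈ (t)` with `∂x = 0`. If `x = c tⁿ⁺¹` then
`0 = ∂x = (n + 1) c tⁿ + tⁿ⁺¹ ∂c`, and since `n + 1` is invertible this gives `c tⁿ ∈ (tⁿ⁺¹)`,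
i.e. `x ∈ (tⁿ⁺²)`. Hence `x` lies in every power of `(t)`, and `x = 0` because `A` is
`t`-adically separated.
-/

section Leibniz

variable {A : Type*} [CommRing A] {D : A → A}

theorem leibniz_pow_succ (hleibniz : ∀ a b : A, D (a * b) = a * D b + b * D a) (a : A) (n : ℕ) :
    D (a ^ (n + 1)) = (n + 1 : ℕ) * a ^ n * D a := by
  induction n with
  | zero => simp
  | succ n ih =>
    rw [pow_succ' a (n + 1), hleibniz, ih]
    push_cast
    ring

variable [Algebra ℚ A] {t : A}

theorem pow_succ_succ_dvd_of_leibniz (hleibniz : ∀ a b : A, D (a * b) = a * D b + b * D a)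
    (hDt : D t = 1) {x : A} (hDx : D x = 0) {n : ℕ} (hx : t ^ (n + 1) ∣ x) :
    t ^ (n + 2) ∣ x := by
  obtain ⟨c, rfl⟩ := hx
  have key : ((n + 1 : ℕ) : A) * (c * t ^ n) = -(t ^ (n + 1) * D c) := by
    rw [mul_comm, hleibniz, leibniz_pow_succ hleibniz, hDt] at hDx
    linear_combination hDx
  have hunit : algebraMap ℚ A ((n + 1 : ℕ) : ℚ)⁻¹ * ((n + 1 : ℕ) : A) = 1 := by
    rw [← map_natCast (algebraMap ℚ A), ← map_mul, inv_mul_cancel₀ (by positivity), map_one]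
  refine ⟨-(algebraMap ℚ A ((n + 1 : ℕ) : ℚ)⁻¹ * D c), ?_⟩
  calc t ^ (n + 1) * c
      = t * (algebraMap ℚ A ((n + 1 : ℕ) : ℚ)⁻¹ * (((n + 1 : ℕ) : A) * (c * t ^ n))) := by
        rw [← mul_assoc _ ((n + 1 : ℕ) : A), hunit]; ring
    _ = _ := by rw [key]; ring

theorem pow_dvd_of_dvd_of_leibniz (hleibniz : ∀ a b : A, D (a * b) = a * D b + b * D a)
    (hDt : D t = 1) {x : A} (hDx : D x = 0) (hx : t ∣ x) (n : ℕ) : t ^ n ∣ x := by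
  induction n with
  | zero => simp
  | succ n ih =>
    cases n with
    | zero => simpa using hx
    | succ n => exact pow_succ_succ_dvd_of_leibniz hleibniz hDt hDx ih

theorem eq_zero_of_dvd_of_leibniz [IsHausdorff (Ideal.span {t}) A]
    (hleibniz : ∀ a b : A, D (a * b) = a * D b + b * D a)
    (hDt : D t = 1) {x : A} (hDx : D x = 0) (hx : t ∣ x) : x = 0 := by
  refine IsHausdorff.haus ‹_› x fun n => ?_
  rw [SModEq.zero, smul_eq_mul, Ideal.mul_top, Ideal.span_singleton_pow,
    Ideal.mem_span_singleton]
  exact pow_dvd_of_dvd_of_leibniz hleibniz hDt hDx hx n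

end Leibniz

/-- If `A` is `t`-adically complete of characteristic zero, `D` is a derivation with
`D t = 1`, and `b = Σ_{i≥0} b_i t^i` with all `b_i ∈ Ker D` (convergence expressed via
partial sums) satisfies `D b = 0`, then `b = b_0`. -/
theorem statement1 {A : Type*} [CommRing A] [Algebra ℚ A] (t : A)
    (hcomplete : IsAdicComplete (Ideal.span {t}) A)
    (D : A → A)
    (hadd : ∀ a b : A, D (a + b) = D a + D b)
    (hleibniz : ∀ a b : A, D (a * b) = a * D b + b * D a)
    (hDt : D t = 1)
    (b : A) (bs : ℕ → A)
    (hker : ∀ i, D (bs i) = 0)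
    (hconv : ∀ N : ℕ, b - ∑ i ∈ Finset.range N, bs i * t ^ i ∈ (Ideal.span {t}) ^ N)
    (hDb : D b = 0) :
    b = bs 0 := by
  have hDx : D (b - bs 0) = 0 := by
    have h := hadd (b - bs 0) (bs 0)
    rwa [sub_add_cancel, hDb, hker 0, add_zero, eq_comm] at h
  have hdvd : t ∣ b - bs 0 := by
    simpa [Ideal.mem_span_singleton] using hconv 1
  have := hcomplete.toIsHausdorff
  exact sub_eq_zero.mp (eq_zero_of_dvd_of_leibniz hleibniz hDt hDx hdvd)
end

section
/- Let A be a commutative ring of characteristic zero, t ∈ A such that A is t-adically complete, and ∂ : A → A a derivation with ∂(t) = 1. Then for any a ∈ A, the element Σ_{i=0}^∞ ((-1)^i / i!) t^i ∂^i(a) lies in Ker(∂) and is congruent to a modulo tA. -/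
open Finset Nat

/-!
Write `c i = (-1)^i / i!`, so that `c N + (N + 1) c (N + 1) = 0`. With `∂ t = 1` the sum
telescopes under `∂`: the `N`-th partial sum `S N` satisfies
`∂ (S (N + 1)) = c N t^N ∂^(N+1) a`, which lies in `t^N A`. Since `s - S (N + 1) ∈ t^(N+1) A`
and `∂` maps `t^(N+1) A` into `t^N A`, also `∂ s ∈ t^N A` for every `N`, so `∂ s = 0` because
`A` is `t`-adically separated. Modulo `t` only the term `i = 0` survives, giving `s ≡ a`.
-/

theorem IsHausdorff.eq_zero_of_forall_mem_pow {R : Type*} [CommRing R] {I : Ideal R}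
    (h : IsHausdorff I R) {x : R} (hx : ∀ n : ℕ, x ∈ I ^ n) : x = 0 :=
  h.haus x fun n => by
    rw [SModEq.zero, Ideal.smul_eq_mul, Ideal.mul_top]
    exact hx n

theorem neg_one_pow_div_factorial_add_succ_mul (N : ℕ) :
    (-1 : ℚ) ^ N / N ! + (N + 1) * ((-1) ^ (N + 1) / (N + 1)!) = 0 := by
  rw [Nat.factorial_succ]
  push_cast
  field_simp
  ring

namespace Derivation

theorem apply_mem_span_pow_of_mem_span_pow_succ {R A : Type*} [CommRing R] [CommRing A]
    [Algebra R A] (d : Derivation R A A) {t x : A} {n : ℕ}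
    (hx : x ∈ Ideal.span {t} ^ (n + 1)) : d x ∈ Ideal.span {t} ^ n := by
  rw [Ideal.span_singleton_pow] at hx ⊢
  obtain ⟨y, rfl⟩ := Ideal.mem_span_singleton'.1 hx
  rw [leibniz, leibniz_pow, Nat.add_sub_cancel]
  exact Ideal.mem_span_singleton'.2 ⟨y * ((n + 1 : ℕ) * d t) + t * d y, by
    simp only [smul_eq_mul, nsmul_eq_mul]; ring⟩

end Derivation

section

variable {A : Type*} [CommRing A] [Algebra ℚ A]

def negExpPartialSum (D : A → A) (t a : A) (N : ℕ) : A :=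
  ∑ i ∈ range N, ((-1 : ℚ) ^ i / i !) • (t ^ i * D^[i] a)

theorem Derivation.apply_negExpPartialSum_succ (d : Derivation ℚ A A) {t : A} (ht : d t = 1)
    (a : A) (N : ℕ) :
    d (negExpPartialSum d t a (N + 1)) = ((-1 : ℚ) ^ N / N !) • (t ^ N * d^[N + 1] a) := by
  induction N with
  | zero => simp [negExpPartialSum]
  | succ N ih =>
    have hc := neg_one_pow_div_factorial_add_succ_mul N
    rw [negExpPartialSum, sum_range_succ, map_add, ← negExpPartialSum, ih, map_smul, leibniz,
      leibniz_pow, ht, Function.iterate_succ_apply' d (N + 1), Nat.add_sub_cancel,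
      eq_neg_of_add_eq_zero_left hc]
    simp only [smul_eq_mul, mul_one]
    rw [mul_comm (d^[N + 1] a), smul_mul_assoc]
    module

end

/-- If `A` is `t`-adically complete of characteristic zero and `D` is a derivation with
`D t = 1`, then any element `s = Σ_{i≥0} ((-1)^i/i!) t^i D^i(a)` (convergence of the sum
expressed via partial sums) lies in `Ker D` and is congruent to `a` modulo `tA`. -/
theorem statement2 {A : Type*} [CommRing A] [Algebra ℚ A] (t : A)
    (hcomplete : IsAdicComplete (Ideal.span {t}) A)
    (D : A → A)
    (hadd : ∀ a b : A, D (a + b) = D a + D b)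
    (hleibniz : ∀ a b : A, D (a * b) = a * D b + b * D a)
    (hDt : D t = 1)
    (a : A) (s : A)
    (hs : ∀ N : ℕ,
      s - ∑ i ∈ Finset.range N, ((-1 : ℚ) ^ i / (Nat.factorial i : ℚ)) • (t ^ i * D^[i] a)
        ∈ (Ideal.span {t}) ^ N) :
    D s = 0 ∧ s - a ∈ Ideal.span {t} := by
  let d : Derivation ℚ A A := Derivation.mk' (AddMonoidHom.mk' D hadd).toRatLinearMap hleibniz
  have hs' : ∀ N, s - negExpPartialSum d t a N ∈ Ideal.span {t} ^ N := hs
  refine ⟨hcomplete.eq_zero_of_forall_mem_pow fun N => ?_, by simpa [negExpPartialSum] using hs' 1⟩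
  have hpartial : d (negExpPartialSum d t a (N + 1)) ∈ Ideal.span {t} ^ N := by
    rw [d.apply_negExpPartialSum_succ hDt, Ideal.span_singleton_pow, Algebra.smul_def]
    exact Ideal.mul_mem_left _ _ (Ideal.mul_mem_right _ _ (Ideal.mem_span_singleton_self _))
  have hds := add_mem hpartial (d.apply_mem_span_pow_of_mem_span_pow_succ (hs' (N + 1)))
  rwa [← map_add, add_sub_cancel] at hds
end

section
/- Let R be a Noetherian commutative ring and I, J ideals with the same integral closure, i.e. Ī = J̄. Then for every n ≥ 1, Iⁿ and Jⁿ have the same integral closure. -/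
/-- The integral closure of an ideal `I` of `R`: the set of `x ∈ R` satisfying an equation
`xⁿ + a₁x^{n−1} + ⋯ + aₙ = 0` with `aᵢ ∈ Iⁱ`. -/
def idealIntegralClosure {R : Type*} [CommRing R] (I : Ideal R) : Set R :=
  {x : R | ∃ m : ℕ, 0 < m ∧ ∃ a : ℕ → R,
    (∀ i, 1 ≤ i → i ≤ m → a i ∈ I ^ i) ∧
    x ^ m + ∑ i ∈ Finset.Icc 1 m, a i * x ^ (m - i) = 0}

/-!
An element `x` lies in the integral closure of `Iⁿ` exactly when `x tⁿ` is integral over the Rees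
algebra `R[It] ⊆ R[t]`: an equation `xᵐ + ∑ aᵢ x^(m-i) = 0` with `aᵢ ∈ I^(ni)` is the
`t^(nm)`-coefficient of a monic equation for `x tⁿ` over `R[It]`, and conversely. If `I ⊆ J̄`, each
generator `g t` of `R[It]` is integral over `R[Jt]`, so by transitivity of integrality `x tⁿ` is
integral over `R[Jt]` as soon as it is integral over `R[It]`. Since `Ī = J̄` gives `I ⊆ J̄` and
`J ⊆ Ī`, the closures of `Iⁿ` and `Jⁿ` agree.
-/

open Polynomial

theorem Finset.sum_range_succ_eq_add_sum_Icc {M : Type*} [AddCommMonoid M] (f : ℕ → M) (m : ℕ) :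
    ∑ i ∈ Finset.range (m + 1), f i = f 0 + ∑ i ∈ Finset.Icc 1 m, f i := by
  rw [Finset.range_eq_Ico, Finset.sum_eq_sum_Ico_succ_bot (by omega), zero_add,
    Finset.Ico_add_one_right_eq_Icc]

theorem Polynomial.coeff_eval_monomial {R : Type*} [CommSemiring R] {Q : R[X][X]} {m : ℕ}
    (hQ : Q.natDegree ≤ m) (n : ℕ) (x : R) :
    (Q.eval (monomial n x)).coeff (n * m) =
      ∑ i ∈ Finset.range (m + 1), (Q.coeff (m - i)).coeff (n * i) * x ^ (m - i) := by
  rw [eval_eq_sum_range' (Nat.lt_add_one_of_le hQ), finsetSum_coeff,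
    ← Finset.sum_range_reflect, Nat.add_sub_cancel]
  refine Finset.sum_congr rfl fun i hi => ?_
  have hi : i ≤ m := Nat.lt_add_one_iff.mp (Finset.mem_range.mp hi)
  rw [monomial_pow, show n * m = n * i + n * (m - i) by rw [← Nat.mul_add, Nat.add_sub_cancel' hi],
    coeff_mul_monomial]

theorem Subalgebra.isIntegral_of_mem_lifts {R A : Type*} [CommRing R] [CommRing A] [Algebra R A]
    {S : Subalgebra R A} {Q : A[X]} (hlifts : Q ∈ lifts (algebraMap S A)) (hQ : Q.Monic)
    {y : A} (hy : Q.eval y = 0) : IsIntegral S y := by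
  obtain ⟨q, rfl, -, hq⟩ := lifts_and_natDegree_eq_and_monic hlifts hQ
  exact ⟨q, hq, by rwa [eval_map] at hy⟩

theorem IsIntegral.of_subalgebra_le {R A : Type*} [CommRing R] [CommRing A] [Algebra R A]
    {S T : Subalgebra R A} (hST : S ≤ T) {z : A} (hz : IsIntegral S z) : IsIntegral T z := by
  obtain ⟨p, hp, hpz⟩ := hz
  exact ⟨p.map (Subalgebra.inclusion hST), hp.map _, by rwa [eval₂_map]⟩

theorem subset_idealIntegralClosure {R : Type*} [CommRing R] (I : Ideal R) :
    (I : Set R) ⊆ idealIntegralClosure I := fun g hg =>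
  ⟨1, one_pos, fun _ => -g, fun i h1 h2 => by rw [le_antisymm h2 h1, pow_one]; exact neg_mem hg,
    by simp⟩

theorem isIntegral_monomial_of_mem_idealIntegralClosure_pow {R : Type*} [CommRing R]
    {I : Ideal R} {n : ℕ} {x : R} (hx : x ∈ idealIntegralClosure (I ^ n)) :
    IsIntegral (reesAlgebra I) (monomial n x) := by
  obtain ⟨m, hm, a, ha, hxa⟩ := hx
  refine Subalgebra.isIntegral_of_mem_lifts
    (Q := X ^ m + ∑ i ∈ Finset.Icc 1 m, C (monomial (n * i) (a i)) * X ^ (m - i)) ?_ ?_ ?_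
  · refine add_mem (pow_mem (X_mem_lifts _) _) (sum_mem fun i hi => ?_)
    have hi := Finset.mem_Icc.mp hi
    have : monomial (n * i) (a i) ∈ reesAlgebra I :=
      reesAlgebra.monomial_mem.mpr (pow_mul I n i ▸ ha i hi.1 hi.2)
    exact mul_mem (C_mem_lifts (algebraMap (reesAlgebra I) R[X]) ⟨_, this⟩)
      (pow_mem (X_mem_lifts _) _)
  · refine monic_X_pow_add (degree_sum_le _ _ |>.trans_lt ?_)
    refine (Finset.sup_lt_iff (WithBot.bot_lt_coe m)).mpr fun i hi => ?_
    have hi := Finset.mem_Icc.mp hi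
    exact (degree_C_mul_X_pow_le _ _).trans_lt
      (WithBot.coe_lt_coe.mpr (Nat.sub_lt_of_pos_le hi.1 hi.2))
  · have : ∀ i ∈ Finset.Icc 1 m, monomial (n * i) (a i) * monomial n x ^ (m - i) =
        monomial (n * m) (a i * x ^ (m - i)) := fun i hi => by
      rw [monomial_pow, monomial_mul_monomial, ← Nat.mul_add,
        Nat.add_sub_cancel' (Finset.mem_Icc.mp hi).2]
    simp only [eval_add, eval_pow, eval_X, eval_finsetSum, eval_mul, eval_C]
    rw [Finset.sum_congr rfl this, ← map_sum, monomial_pow, ← map_add, hxa, map_zero]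

theorem mem_idealIntegralClosure_pow_of_eval_monomial_eq_zero {R : Type*} [CommRing R]
    {I : Ideal R} {Q : R[X][X]} (hQ : Q.Monic) (hdeg : 0 < Q.natDegree)
    (hcoeff : ∀ j, Q.coeff j ∈ reesAlgebra I) {n : ℕ} {x : R} (hQx : Q.eval (monomial n x) = 0) :
    x ∈ idealIntegralClosure (I ^ n) := by
  refine ⟨Q.natDegree, hdeg, fun i => (Q.coeff (Q.natDegree - i)).coeff (n * i),
    fun i _ _ => pow_mul I n i ▸ hcoeff _ (n * i), ?_⟩
  have htop := coeff_eval_monomial (le_refl Q.natDegree) n x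
  rwa [hQx, coeff_zero, Finset.sum_range_succ_eq_add_sum_Icc, Nat.sub_zero, hQ.coeff_natDegree,
    mul_zero, coeff_one_zero, one_mul, eq_comm] at htop

theorem mem_idealIntegralClosure_pow_of_isIntegral_monomial {R : Type*} [CommRing R]
    {I : Ideal R} {n : ℕ} {x : R} (hx : IsIntegral (reesAlgebra I) (monomial n x)) :
    x ∈ idealIntegralClosure (I ^ n) := by
  rcases subsingleton_or_nontrivial R with hR | hR
  · exact subset_idealIntegralClosure _ (Subsingleton.elim 0 x ▸ zero_mem _)
  obtain ⟨p, hp, hpx⟩ := hx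
  -- multiplying by `X` gives the positive degree the definition asks for
  have hpX := hp.mul monic_X
  refine mem_idealIntegralClosure_pow_of_eval_monomial_eq_zero
    (hpX.map (algebraMap (reesAlgebra I) R[X])) ?_
    (fun j => by rw [coeff_map]; exact Subtype.prop _) ?_
  · rw [hpX.natDegree_map, natDegree_mul_X hp.ne_zero]
    omega
  · rw [eval_map, eval₂_mul, hpx, zero_mul]

theorem reesAlgebra_le_integralClosure_reesAlgebra {R : Type*} [CommRing R] {I J : Ideal R}
    (hIJ : (I : Set R) ⊆ idealIntegralClosure J) :
    reesAlgebra I ≤ (integralClosure (reesAlgebra J) R[X]).restrictScalars R := by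
  rw [← adjoin_monomial_eq_reesAlgebra]
  refine Algebra.adjoin_le ?_
  rintro _ ⟨g, hg, rfl⟩
  exact isIntegral_monomial_of_mem_idealIntegralClosure_pow (n := 1) ((pow_one J).symm ▸ hIJ hg)

theorem idealIntegralClosure_pow_subset {R : Type*} [CommRing R] {I J : Ideal R}
    (hIJ : (I : Set R) ⊆ idealIntegralClosure J) (n : ℕ) :
    idealIntegralClosure (I ^ n) ⊆ idealIntegralClosure (J ^ n) := by
  intro x hx
  have hxI := isIntegral_monomial_of_mem_idealIntegralClosure_pow hx
  have hxJ : IsIntegral (integralClosure (reesAlgebra J) R[X]) (monomial n x) :=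
    hxI.of_subalgebra_le (reesAlgebra_le_integralClosure_reesAlgebra hIJ)
  exact mem_idealIntegralClosure_pow_of_isIntegral_monomial (isIntegral_trans _ hxJ)

theorem statement10_general {R : Type*} [CommRing R]
    (I J : Ideal R) (h : idealIntegralClosure I = idealIntegralClosure J)
    (n : ℕ) :
    idealIntegralClosure (I ^ n) = idealIntegralClosure (J ^ n) :=
  (idealIntegralClosure_pow_subset (h ▸ subset_idealIntegralClosure I) n).antisymm
    (idealIntegralClosure_pow_subset (h.symm ▸ subset_idealIntegralClosure J) n)

/-- In a Noetherian ring, if two ideals have the same integral closure then so do their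
`n`-th powers, for every `n ≥ 1`. -/
theorem statement10 {R : Type*} [CommRing R] [IsNoetherianRing R]
    (I J : Ideal R) (h : idealIntegralClosure I = idealIntegralClosure J)
    (n : ℕ) (hn : 1 ≤ n) :
    idealIntegralClosure (I ^ n) = idealIntegralClosure (J ^ n) :=
  statement10_general I J h n
end

section
/- Let (R, m) be a regular local ring of characteristic zero, I ⊆ R an ideal with ord(I) = d finite, and suppose the module of derivations of R separates a regular system of parameters (i.e., for each parameter tᵢ there is a derivation ∂ᵢ with ∂ᵢ(tᵢ) a unit and ∂ᵢ(tⱼ)=0 for j≠i). Then d is the minimal natural number such that the ideal generated by all values D(I), as D ranges over differential operators of order ≤ d (compositions of at most d derivations and multiplications), equals R. -/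
/-!
Let `t` generate `m` and let `E = ∑ tᵢ vᵢ Dᵢ` with `vᵢ = (Dᵢ tᵢ)⁻¹`, so that `E tⱼ = tⱼ` and `E`
takes values in `m`. Then `E` is an Euler operator: `E x ≡ k x` modulo `m^(k+1)` for
`x ∈ m^k`. Derivations lower the order by at most one, so `F^{≤e}(I) ⊆ m^(d-e)`. Conversely,
if `x ∈ m^k` with `k ≠ 0` and all `Dᵢ x ∈ m^k`, then `k x ≡ E x ≡ 0` modulo `m^(k+1)`, and `k` is
invertible; so each application of derivations lowers the order of `I` by exactly one.
-/

open Ideal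

namespace Derivation

variable {A R : Type*} [CommRing A] [CommRing R] [Algebra A R] {J : Ideal R}

theorem map_mem_pow_of_mem_pow_succ (D : Derivation A R R) {k : ℕ} {x : R}
    (hx : x ∈ J ^ (k + 1)) : D x ∈ J ^ k := by
  induction k generalizing x with
  | zero => simp
  | succ k ih =>
    rw [pow_succ] at hx
    refine Submodule.mul_induction_on hx (fun a ha b hb => ?_) fun x y hx hy => ?_
    · rw [D.leibniz, smul_eq_mul, smul_eq_mul]
      refine add_mem (mul_mem_right _ _ ha) ?_
      rw [pow_succ]
      exact mul_comm b _ ▸ mul_mem_mul (ih ha) hb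
    · rw [map_add]
      exact add_mem hx hy

variable (E : Derivation A R R)

theorem sub_mem_span_sq {S : Set R} (hS : ∀ s ∈ S, E s = s) (hE : ∀ r, E r ∈ span S)
    {x : R} (hx : x ∈ span S) : E x - x ∈ span S ^ 2 := by
  induction hx using Submodule.span_induction with
  | mem s hs => simp [hS s hs]
  | zero => simp
  | add x y _ _ hx hy =>
    rw [map_add, add_sub_add_comm]
    exact add_mem hx hy
  | smul r x hx ih =>
    have : E (r • x) - r • x = r * (E x - x) + x * E r := by
      rw [smul_eq_mul, leibniz, smul_eq_mul, smul_eq_mul]; ring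
    refine this ▸ add_mem (mul_mem_left _ _ ih) ?_
    rw [pow_two]
    exact mul_mem_mul hx (hE r)

theorem sub_natCast_mul_mem_pow_succ (hE : ∀ r, E r ∈ J) (hJ : ∀ x ∈ J, E x - x ∈ J ^ 2)
    {k : ℕ} {x : R} (hx : x ∈ J ^ k) : E x - k * x ∈ J ^ (k + 1) := by
  induction k generalizing x with
  | zero => simpa using hE x
  | succ k ih =>
    rw [pow_succ] at hx
    refine Submodule.mul_induction_on hx (fun a ha b hb => ?_) fun x y hx hy => ?_
    · have : E (a * b) - ((k + 1 : ℕ) : R) * (a * b) = a * (E b - b) + b * (E a - k * a) := by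
        rw [leibniz, smul_eq_mul, smul_eq_mul]; push_cast; ring
      rw [this]
      refine add_mem ?_ ?_
      · rw [show k + 1 + 1 = k + 2 by rfl, pow_add]
        exact mul_mem_mul ha (hJ b hb)
      · rw [pow_succ]
        exact mul_comm b _ ▸ mul_mem_mul (ih ha) hb
    · rw [map_add, mul_add, add_sub_add_comm]
      exact add_mem hx hy

end Derivation

section SeparatingDerivations

variable {R : Type*} [CommRing R] [Algebra ℚ R] {n : ℕ}

theorem mem_span_pow_succ_of_map_mem_span_pow (t : Fin n → R) (D : Fin n → Derivation ℚ R R)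
    (hsep : ∀ i, IsUnit (D i (t i)) ∧ ∀ j, j ≠ i → D i (t j) = 0) {k : ℕ} (hk : k ≠ 0) {x : R}
    (hx : x ∈ span (Set.range t) ^ k) (hDx : ∀ i, D i x ∈ span (Set.range t) ^ k) :
    x ∈ span (Set.range t) ^ (k + 1) := by
  set J := span (Set.range t)
  have ht i : t i ∈ J := subset_span ⟨i, rfl⟩
  let v i : R := ((hsep i).1.unit⁻¹ : Rˣ)
  let E : Derivation ℚ R R := ∑ i, (t i * v i) • D i
  have hE y : E y = ∑ i, t i * v i * D i y := by
    rw [← Derivation.coeFnAddMonoidHom_apply, map_sum, Finset.sum_apply]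
    simp
  have hEt j : E (t j) = t j := by
    rw [hE, Finset.sum_eq_single j (fun i _ hij => by simp [(hsep i).2 j hij.symm]) (by simp),
      mul_assoc, (hsep j).1.val_inv_mul, mul_one]
  have hEJ y : E y ∈ J := by
    rw [hE]
    exact sum_mem fun i _ => mul_mem_right _ _ (mul_mem_right _ _ (ht i))
  have hEx : E x ∈ J ^ (k + 1) := by
    rw [hE]
    refine sum_mem fun i _ => ?_
    rw [mul_right_comm, pow_succ']
    exact mul_mem_right _ _ (mul_mem_mul (ht i) (hDx i))
  have heuler := E.sub_natCast_mul_mem_pow_succ hEJ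
    (fun y => E.sub_mem_span_sq (by simpa using hEt) hEJ) hx
  have hkx : (k : R) * x ∈ J ^ (k + 1) := by simpa using sub_mem hEx heuler
  have hunit : IsUnit (k : R) := by
    simpa using (Nat.cast_ne_zero.2 hk : (k : ℚ) ≠ 0).isUnit.map (algebraMap ℚ R)
  exact (unit_mul_mem_iff_mem _ hunit).1 hkx

end SeparatingDerivations

/-- The iterated derivation ideal `F^{≤i}(I)` (for the module of all `ℚ`-derivations):
`F^{≤0}(I) = I` and `F^{≤i+1}(I) = F^{≤i}(I) + (D x : D a derivation, x ∈ F^{≤i}(I))`. -/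
def derIdeal (R : Type*) [CommRing R] [Algebra ℚ R] : ℕ → Ideal R → Ideal R
  | 0, I => I
  | (i + 1), I => derIdeal R i I ⊔
      Ideal.span {y : R | ∃ D : Derivation ℚ R R, ∃ x ∈ derIdeal R i I, y = D x}

section derIdeal

variable {R : Type*} [CommRing R] [Algebra ℚ R] {I J : Ideal R}

theorem derIdeal_le_derIdeal_succ (e : ℕ) : derIdeal R e I ≤ derIdeal R (e + 1) I :=
  le_sup_left

theorem derivation_mem_derIdeal_succ (D : Derivation ℚ R R) {e : ℕ} {x : R}
    (hx : x ∈ derIdeal R e I) : D x ∈ derIdeal R (e + 1) I :=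
  mem_sup_right (subset_span ⟨D, x, hx, rfl⟩)

theorem derIdeal_le_pow {k e : ℕ} (h : I ≤ J ^ (k + e)) : derIdeal R e I ≤ J ^ k := by
  induction e generalizing k with
  | zero => exact h
  | succ e ih =>
    have h' : derIdeal R e I ≤ J ^ (k + 1) := ih (by rwa [add_right_comm, add_assoc])
    refine sup_le (h'.trans (pow_le_pow_right k.le_succ)) (span_le.2 ?_)
    rintro _ ⟨D, x, hx, rfl⟩
    exact D.map_mem_pow_of_mem_pow_succ (h' hx)

theorem le_span_pow_of_derIdeal_le_span_pow {n : ℕ} (t : Fin n → R)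
    (D : Fin n → Derivation ℚ R R)
    (hsep : ∀ i, IsUnit (D i (t i)) ∧ ∀ j, j ≠ i → D i (t j) = 0) {k e : ℕ}
    (h : derIdeal R e I ≤ span (Set.range t) ^ (k + 1)) :
    I ≤ span (Set.range t) ^ (k + e + 1) := by
  induction e generalizing k with
  | zero => exact h
  | succ e ih =>
    rw [show k + (e + 1) + 1 = k + 1 + e + 1 by omega]
    refine ih fun x hx => mem_span_pow_succ_of_map_mem_span_pow t D hsep k.succ_ne_zero
      (h (derIdeal_le_derIdeal_succ e hx)) fun i => h (derivation_mem_derIdeal_succ (D i) hx)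

end derIdeal

theorem statement12_general {R : Type*} [CommRing R] [IsLocalRing R]
    [Algebra ℚ R] {n : ℕ} (t : Fin n → R)
    (hparam : Ideal.span (Set.range t) = IsLocalRing.maximalIdeal R)
    (D : Fin n → Derivation ℚ R R)
    (hsep : ∀ i, IsUnit (D i (t i)) ∧ ∀ j, j ≠ i → D i (t j) = 0)
    (I : Ideal R) (d : ℕ)
    (hId : I ≤ (IsLocalRing.maximalIdeal R) ^ d)
    (hId' : ¬ I ≤ (IsLocalRing.maximalIdeal R) ^ (d + 1)) :
    derIdeal R d I = ⊤ ∧ ∀ e : ℕ, derIdeal R e I = ⊤ → d ≤ e := by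
  refine ⟨by_contra fun hne => hId' ?_, fun e he => by_contra fun hlt => ?_⟩
  · have h := le_span_pow_of_derIdeal_le_span_pow t D hsep (k := 0)
      (by simpa [hparam] using IsLocalRing.le_maximalIdeal hne)
    simpa [hparam] using h
  · have h : derIdeal R e I ≤ IsLocalRing.maximalIdeal R ^ 1 :=
      derIdeal_le_pow (hId.trans (pow_le_pow_right (by omega)))
    rw [he, pow_one, top_le_iff] at h
    exact (IsLocalRing.maximalIdeal.isMaximal R).ne_top h

/-- Let `(R, m)` be a regular local ring of characteristic zero whose derivations separate a
regular system of parameters `t 1, …, t n`, and let `I` be an ideal of order `d` (finite).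
Then `d` is the minimal natural number such that the iterated derivation ideal `F^{≤d}(I)`
is the unit ideal. -/
theorem statement12 {R : Type*} [CommRing R] [IsLocalRing R] [IsNoetherianRing R]
    [Algebra ℚ R] {n : ℕ} (t : Fin n → R)
    (hparam : Ideal.span (Set.range t) = IsLocalRing.maximalIdeal R)
    (D : Fin n → Derivation ℚ R R)
    (hsep : ∀ i, IsUnit (D i (t i)) ∧ ∀ j, j ≠ i → D i (t j) = 0)
    (I : Ideal R) (d : ℕ)
    (hId : I ≤ (IsLocalRing.maximalIdeal R) ^ d)
    (hId' : ¬ I ≤ (IsLocalRing.maximalIdeal R) ^ (d + 1)) :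
    derIdeal R d I = ⊤ ∧ ∀ e : ℕ, derIdeal R e I = ⊤ → d ≤ e :=
  statement12_general t hparam D hsep I d hId hId'
end
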